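/- arXiv:2002.06043 — 5 statements merged into one kernel-verified Lean document; each statement's English description precedes it below -/
import Mathlib

section
/- The unordered set estimator e^{US}(S^k) = ∑_{s∈S^k} p(s) R(S^k,s) f(s), where R(S^k,s) = p^{D\{s}}(S^k\{s})/p(S^k) is the leave-one-out ratio, is an unbiased estimator of E_{x~p}[f(x)]: that is, ∑_{S ⊆ D, |S|=k} p(S) e^{US}(S) = ∑_{x∈D} p(x) f(x). -/
/-! Conditioning on the first draw gives `p(S) = ∑_{s ∈ S} p(s) p^{D∖{s}}(S∖{s})`. Hence, after
cancelling `p(S)`, the expectation of the estimator is `∑_S ∑_{s ∈ S} p(s) p^{D∖{s}}(S∖{s}) f(s)`;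
re-indexing the pairs `(S, s)` by `(s, S∖{s})` turns it into
`∑_s p(s) f(s) ∑_{T ⊆ D∖{s}, |T| = k-1} p^{D∖{s}}(T)`, and the inner sum is `1` because the
probabilities of all samples of a given size add up to one, which follows from the same
first-draw decomposition by induction on the size. -/

open Finset MeasureTheory

variable {α : Type*}

/-- Probability of drawing the ordered sample `B` sequentially without replacement
from (unnormalized) weights `p`, when `t` is the total remaining probability mass. -/
noncomputable def ordProb (p : α → ℝ) : ℝ → List α → ℝ
  | _, [] => 1
  | t, b :: L => (p b / t) * ordProb p (t - p b) L

/-- Probability of drawing the unordered sample `S` without replacement: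
sum of `ordProb` over all orderings of `S`. -/
noncomputable def setProb (p : α → ℝ) (t : ℝ) (S : Finset α) : ℝ :=
  (S.toList.permutations.map (ordProb p t)).sum

lemma setProb_empty (p : α → ℝ) (t : ℝ) : setProb p t ∅ = 1 := by
  simp [setProb, ordProb]

section

variable [DecidableEq α]

noncomputable def orderings (S : Finset α) : Finset (List α) :=
  S.toList.permutations.toFinset

lemma mem_orderings {S : Finset α} {l : List α} :
    l ∈ orderings S ↔ (l : Multiset α) = S.val := by
  rw [orderings, List.mem_toFinset, List.mem_permutations, ← Finset.coe_toList S,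
    Multiset.coe_eq_coe]

lemma setProb_eq_sum_orderings (p : α → ℝ) (t : ℝ) (S : Finset α) :
    setProb p t S = ∑ l ∈ orderings S, ordProb p t l := by
  rw [setProb, orderings, List.sum_toFinset _ (List.nodup_permutations _ S.nodup_toList)]

lemma setProb_eq_sum_erase (p : α → ℝ) (t : ℝ) {S : Finset α} (hS : S.Nonempty) :
    setProb p t S = ∑ s ∈ S, p s / t * setProb p (t - p s) (S.erase s) := by
  simp only [setProb_eq_sum_orderings, mul_sum]
  rw [sum_sigma']
  refine (sum_bij (fun x _ => x.1 :: x.2) ?_ ?_ ?_ fun _ _ => rfl).symm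
  · rintro ⟨s, l⟩ hsl
    obtain ⟨hs, hl⟩ := mem_sigma.1 hsl
    rw [mem_orderings] at hl ⊢
    rw [← Multiset.cons_coe, hl, erase_val, Multiset.cons_erase (mem_def.1 hs)]
  · rintro ⟨s, l⟩ - ⟨s', l'⟩ - h
    obtain ⟨rfl, rfl⟩ := List.cons.inj h
    rfl
  · intro l hl
    rw [mem_orderings] at hl
    obtain ⟨a, l', rfl⟩ : ∃ a l', l = a :: l' := by
      refine List.exists_cons_of_ne_nil ?_
      rintro rfl
      exact hS.ne_empty (val_eq_zero.1 hl.symm)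
    rw [← Multiset.cons_coe] at hl
    have ha : a ∈ S := by rw [mem_def, ← hl]; exact Multiset.mem_cons_self a _
    refine ⟨⟨a, l'⟩, mem_sigma.2 ⟨ha, ?_⟩, rfl⟩
    rw [mem_orderings, erase_val, ← hl, Multiset.erase_cons_head]

lemma setProb_pos {p : α → ℝ} {t : ℝ} {S : Finset α} (hp : ∀ x ∈ S, 0 < p x)
    (ht : ∑ x ∈ S, p x ≤ t) : 0 < setProb p t S := by
  induction S using Finset.strongInduction generalizing t with
  | H S ih =>
  obtain rfl | hS := S.eq_empty_or_nonempty
  · simp [setProb_empty]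
  rw [setProb_eq_sum_erase p t hS]
  refine sum_pos (fun s hs => mul_pos (div_pos (hp s hs) ?_) ?_) hS
  · exact (hp s hs).trans_le ((single_le_sum (fun x hx => (hp x hx).le) hs).trans ht)
  · refine ih _ (erase_ssubset hs) (fun x hx => hp x (mem_of_mem_erase hx)) ?_
    rw [sum_erase_eq_sub hs]
    linarith

lemma sum_powersetCard_succ_sum_erase {β : Type*} [AddCommMonoid β] (E : Finset α) (m : ℕ)
    (F : α → Finset α → β) :
    ∑ S ∈ E.powersetCard (m + 1), ∑ s ∈ S, F s (S.erase s)
      = ∑ s ∈ E, ∑ T ∈ (E.erase s).powersetCard m, F s T := by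
  rw [sum_sigma', sum_sigma']
  refine sum_nbij' (fun x => ⟨x.2, x.1.erase x.2⟩) (fun x => ⟨insert x.1 x.2, x.1⟩)
    ?_ ?_ ?_ ?_ fun _ _ => rfl
  · rintro ⟨S, s⟩ h
    simp only [mem_sigma, mem_powersetCard] at h ⊢
    obtain ⟨⟨hSE, hcard⟩, hs⟩ := h
    exact ⟨hSE hs, erase_subset_erase s hSE, by rw [card_erase_of_mem hs, hcard]; rfl⟩
  · rintro ⟨s, T⟩ h
    simp only [mem_sigma, mem_powersetCard] at h ⊢
    obtain ⟨hs, hTE, hcard⟩ := h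
    have hsT : s ∉ T := fun h => (mem_erase.1 (hTE h)).1 rfl
    exact ⟨⟨insert_subset hs (hTE.trans (erase_subset s E)), by
      rw [card_insert_of_notMem hsT, hcard]⟩, mem_insert_self s T⟩
  · rintro ⟨S, s⟩ h
    simp only [mem_sigma] at h
    simp [insert_erase h.2]
  · rintro ⟨s, T⟩ h
    simp only [mem_sigma, mem_powersetCard] at h
    have hsT : s ∉ T := fun h' => (mem_erase.1 (h.2.1 h')).1 rfl
    simp [erase_insert hsT]

lemma sum_setProb_powersetCard {p : α → ℝ} {E : Finset α} (hp : ∀ x ∈ E, 0 < p x) {m : ℕ}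
    (hm : m ≤ #E) : ∑ T ∈ E.powersetCard m, setProb p (∑ x ∈ E, p x) T = 1 := by
  induction m generalizing E with
  | zero => simp [setProb_empty]
  | succ m ih =>
  have hE : 0 < ∑ x ∈ E, p x := sum_pos hp (card_pos.1 (by omega))
  calc ∑ T ∈ E.powersetCard (m + 1), setProb p (∑ x ∈ E, p x) T
      = ∑ T ∈ E.powersetCard (m + 1), ∑ s ∈ T,
          p s / (∑ x ∈ E, p x) * setProb p (∑ x ∈ E, p x - p s) (T.erase s) :=
        sum_congr rfl fun T hT => setProb_eq_sum_erase p _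
          (card_pos.1 (by rw [(mem_powersetCard.1 hT).2]; omega))
    _ = ∑ s ∈ E, p s / (∑ x ∈ E, p x) *
          ∑ T ∈ (E.erase s).powersetCard m, setProb p (∑ x ∈ E.erase s, p x) T := by
        refine (sum_powersetCard_succ_sum_erase E m
          fun s T => p s / (∑ x ∈ E, p x) * setProb p (∑ x ∈ E, p x - p s) T).trans ?_
        refine sum_congr rfl fun s hs => ?_
        rw [mul_sum, sum_erase_eq_sub hs]
    _ = 1 := by
        rw [← div_self hE.ne', sum_div]
        refine sum_congr rfl fun s hs => ?_
        rw [ih (fun x hx => hp x (mem_of_mem_erase hx)) (by rw [card_erase_of_mem hs]; omega),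
          mul_one]

end

theorem unordered_set_estimator_unbiased [DecidableEq α] (D : Finset α) (k : ℕ)
    (hk1 : 1 ≤ k) (hk : k ≤ D.card) (p f : α → ℝ)
    (hp : ∀ x ∈ D, 0 < p x) (hsum : ∑ x ∈ D, p x = 1) :
    ∑ S ∈ D.powersetCard k, setProb p 1 S *
        ∑ s ∈ S, p s * (setProb p (1 - p s) (S.erase s) / setProb p 1 S) * f s
      = ∑ x ∈ D, p x * f x := by
  obtain ⟨m, rfl⟩ : ∃ m, k = m + 1 := ⟨k - 1, by omega⟩
  have hcancel : ∀ S ∈ D.powersetCard (m + 1),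
      setProb p 1 S * ∑ s ∈ S, p s * (setProb p (1 - p s) (S.erase s) / setProb p 1 S) * f s
        = ∑ s ∈ S, p s * f s * setProb p (1 - p s) (S.erase s) := by
    intro S hS
    have hSD := (mem_powersetCard.1 hS).1
    have hpos : 0 < setProb p 1 S := setProb_pos (fun x hx => hp x (hSD hx))
      (hsum ▸ sum_le_sum_of_subset_of_nonneg hSD fun x hx _ => (hp x hx).le)
    rw [mul_sum]
    refine sum_congr rfl fun s _ => ?_
    field_simp
  rw [sum_congr rfl hcancel,
    sum_powersetCard_succ_sum_erase D m fun s T => p s * f s * setProb p (1 - p s) T]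
  refine sum_congr rfl fun s hs => ?_
  rw [← mul_sum, ← hsum, ← sum_erase_eq_sub hs,
    sum_setProb_powersetCard (fun x hx => hp x (mem_of_mem_erase hx))
      (by rw [card_erase_of_mem hs]; omega), mul_one]
end

section
/- The conditional expectation of the single-sample estimator given the unordered sample equals the unordered set estimator: E_{b_1 ~ p(b_1 | S^k)}[f(b_1)] = ∑_{s∈S^k} p(s) R(S^k,s) f(s), where R(S^k,s) = p^{D\{s}}(S^k\{s})/p(S^k). -/
open Finset MeasureTheory

variable {α : Type*}

/-
The orderings of `S` split according to their first element `s`, and those starting with `s`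
are `s` followed by an ordering of `S \ {s}`. Since `ordProb p 1 (s :: L) = p s * ordProb p
(1 - p s) L`, they carry total mass `p s * setProb p (1 - p s) (S.erase s)`, the numerator of
`p s * R(S, s)`.
-/

theorem Multiset.cons_eq_iff_mem_and_eq_erase [DecidableEq α] {a : α} {s t : Multiset α} :
    a ::ₘ s = t ↔ a ∈ t ∧ s = t.erase a := by
  constructor
  · rintro rfl
    exact ⟨mem_cons_self a s, (erase_cons_head a s).symm⟩
  · rintro ⟨ha, rfl⟩
    exact cons_erase ha

namespace Finset

theorem mem_permutations_toList {S : Finset α} {B : List α} :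
    B ∈ S.toList.permutations ↔ (B : Multiset α) = S.val := by
  rw [List.mem_permutations, ← Multiset.coe_eq_coe, coe_toList]

theorem cons_mem_permutations_toList [DecidableEq α] {S : Finset α} {s : α} {L : List α} :
    s :: L ∈ S.toList.permutations ↔ s ∈ S ∧ L ∈ (S.erase s).toList.permutations := by
  rw [mem_permutations_toList, mem_permutations_toList, erase_val, ← Multiset.cons_coe,
    Multiset.cons_eq_iff_mem_and_eq_erase, mem_val]

theorem sum_map_permutations_toList_eq_sum_cons [DecidableEq α] {M : Type*} [AddCommMonoid M]
    {S : Finset α} (hS : S.Nonempty) (g : List α → M) :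
    (S.toList.permutations.map g).sum
      = ∑ s ∈ S, ((S.erase s).toList.permutations.map fun L => g (s :: L)).sum := by
  simp only [← List.sum_toFinset _ (List.nodup_permutations _ (nodup_toList _))]
  rw [sum_sigma']
  symm
  refine sum_bij (fun x _ => x.1 :: x.2) ?_ ?_ ?_ fun _ _ => rfl
  · rintro ⟨s, L⟩ hsL
    rw [mem_sigma, List.mem_toFinset] at hsL
    rw [List.mem_toFinset, cons_mem_permutations_toList]
    exact hsL
  · rintro ⟨s, L⟩ - ⟨s', L'⟩ - h
    obtain ⟨rfl, rfl⟩ := List.cons_eq_cons.mp h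
    rfl
  · intro B hB
    rw [List.mem_toFinset] at hB
    obtain ⟨s, L, rfl⟩ : ∃ s L, B = s :: L := by
      refine List.exists_cons_of_ne_nil fun hB_nil => hS.ne_empty ?_
      rw [hB_nil, mem_permutations_toList] at hB
      exact val_eq_zero.mp hB.symm
    exact ⟨⟨s, L⟩, by simpa only [mem_sigma, List.mem_toFinset] using
      cons_mem_permutations_toList.mp hB, rfl⟩

end Finset

theorem sum_map_permutations_ordProb_cons (p : α → ℝ) (t : ℝ) (s : α) (S : Finset α) :
    (S.toList.permutations.map fun L => ordProb p t (s :: L)).sum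
      = p s / t * setProb p (t - p s) S := by
  simp only [ordProb, List.sum_map_mul_left, setProb]

theorem rao_blackwell_single_sample_general [DecidableEq α] [Inhabited α] (S : Finset α)
    (hSne : S.Nonempty) (p f : α → ℝ) :
    ((S.toList.permutations.map (fun B => ordProb p 1 B * f B.headI)).sum) / setProb p 1 S
      = ∑ s ∈ S, p s * (setProb p (1 - p s) (S.erase s) / setProb p 1 S) * f s := by
  rw [sum_map_permutations_toList_eq_sum_cons hSne, sum_div]
  refine sum_congr rfl fun s _ => ?_
  simp only [List.headI_cons, List.sum_map_mul_right, sum_map_permutations_ordProb_cons, div_one]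
  ring

theorem rao_blackwell_single_sample [DecidableEq α] [Inhabited α] (D S : Finset α)
    (hS : S ⊆ D) (hSne : S.Nonempty) (p f : α → ℝ)
    (hp : ∀ x ∈ D, 0 < p x) (hsum : ∑ x ∈ D, p x = 1) :
    ((S.toList.permutations.map (fun B => ordProb p 1 B * f B.headI)).sum) / setProb p 1 S
      = ∑ s ∈ S, p s * (setProb p (1 - p s) (S.erase s) / setProb p 1 S) * f s :=
  rao_blackwell_single_sample_general S hSne p f
end

section
/- The conditional probability that s is the LAST element of an ordered sample without replacement, given the unordered sample S^k, equals (p(S^k\{s})/p(S^k)) · p(s)/(1 - ∑_{s'∈S^k\{s}} p(s')). -/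
/-! The probability of drawing an ordering `L` of `S \ {s}` and then `s` factors as the
probability of `L` times `p s / (t - p(S \ {s}))`: the mass left after `L` depends only on the
set `S \ {s}`, not on the order. Summing this over the orderings of `S \ {s}` gives
`p(S \ {s}) · p s / (1 - p(S \ {s}))`. -/

open Finset MeasureTheory

variable {α : Type*}

theorem ordProb_append_singleton (p : α → ℝ) (s : α) (L : List α) (t : ℝ) :
    ordProb p t (L ++ [s]) = ordProb p t L * (p s / (t - (L.map p).sum)) := by
  induction L generalizing t with
  | nil => simp [ordProb]
  | cons b L ih =>
    rw [List.cons_append, ordProb, ih, ordProb, List.map_cons, List.sum_cons, ← sub_sub]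
    ring

theorem ordProb_append_singleton_of_perm (p : α → ℝ) (t : ℝ) (S : Finset α) (s : α)
    {L : List α} (hL : L.Perm S.toList) :
    ordProb p t (L ++ [s]) = ordProb p t L * (p s / (t - ∑ x ∈ S, p x)) := by
  rw [ordProb_append_singleton, (hL.map p).sum_eq, Finset.sum_map_toList]

theorem sum_permutations_ordProb_append_singleton (p : α → ℝ) (t : ℝ) (S : Finset α) (s : α) :
    (S.toList.permutations.map fun L => ordProb p t (L ++ [s])).sum
      = setProb p t S * (p s / (t - ∑ x ∈ S, p x)) := by
  rw [setProb, ← List.sum_map_mul_right]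
  exact congrArg List.sum <| List.map_congr_left fun L hL =>
    ordProb_append_singleton_of_perm p t S s (List.mem_permutations.mp hL)

theorem last_element_conditional_general [DecidableEq α] (S : Finset α)
    (s : α) (p : α → ℝ) :
    (((S.erase s).toList.permutations.map (fun L => ordProb p 1 (L ++ [s]))).sum) / setProb p 1 S
      = (setProb p 1 (S.erase s) / setProb p 1 S) * (p s / (1 - ∑ s' ∈ S.erase s, p s')) := by
  rw [sum_permutations_ordProb_append_singleton, div_mul_eq_mul_div₀]

theorem last_element_conditional [DecidableEq α] (D S : Finset α) (hS : S ⊆ D)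
    (s : α) (hs : s ∈ S) (p : α → ℝ) (hp : ∀ x ∈ D, 0 < p x) (hsum : ∑ x ∈ D, p x = 1) :
    (((S.erase s).toList.permutations.map (fun L => ordProb p 1 (L ++ [s]))).sum) / setProb p 1 S
      = (setProb p 1 (S.erase s) / setProb p 1 S) * (p s / (1 - ∑ s' ∈ S.erase s, p s')) :=
  last_element_conditional_general S s p
end

section
/- The stochastic sum-and-sample estimator is unbiased: E_{B^k}[ ∑_{j=1}^{k-1} p(b_j) f(b_j) + (1 - ∑_{j=1}^{k-1} p(b_j)) f(b_k) ] = E_{x~p}[f(x)], where B^k is an ordered sample without replacement of size k from p. -/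
open Finset MeasureTheory

variable {α : Type*}

/-!
Condition on the first draw `b`, which has probability `p b / t` where `t` is the total mass.
Given `b`, the remaining draws are an ordered sample of size `k - 1` from `D \ {b}` with total
mass `t - p b`, and the estimator splits as `p b * f b` plus the estimator of that smaller sample.
By induction the latter is unbiased for `∑ x ∈ D \ {b}, p x * f x`, so the conditional expectation
given every first draw is already `∑ x ∈ D, p x * f x`. For `k = 1` the estimator is `t * f b`.
-/

section Estimator

variable [Inhabited α]

/-- The estimator for a population of total mass `t`; the general `t` makes it recursive in the
sample (`sumAndSample_cons`). -/
noncomputable def sumAndSample (p f : α → ℝ) (t : ℝ) (B : List α) : ℝ :=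
  (B.dropLast.map (fun b => p b * f b)).sum + (t - (B.dropLast.map p).sum) * f B.reverse.headI

lemma sumAndSample_singleton (p f : α → ℝ) (t : ℝ) (b : α) :
    sumAndSample p f t [b] = t * f b := by
  simp [sumAndSample]

lemma sumAndSample_cons (p f : α → ℝ) (t : ℝ) (b : α) {L : List α} (hL : L ≠ []) :
    sumAndSample p f t (b :: L) = p b * f b + sumAndSample p f (t - p b) L := by
  obtain ⟨L, c, rfl⟩ := (List.eq_nil_or_concat' L).resolve_left hL
  simp only [sumAndSample, ← List.cons_append, List.dropLast_concat, List.reverse_concat,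
    List.headI_cons, List.map_cons, List.sum_cons]
  ring

end Estimator

section SequentialSampling

variable [DecidableEq α]

def orderedSamples : ℕ → Finset α → Finset (List α)
  | 0, _ => {[]}
  | k + 1, D => D.biUnion fun b => (orderedSamples k (D.erase b)).image (b :: ·)

lemma mem_orderedSamples {k : ℕ} {D : Finset α} {B : List α} :
    B ∈ orderedSamples k D ↔ B.Nodup ∧ B.length = k ∧ ∀ x ∈ B, x ∈ D := by
  induction k generalizing D B with
  | zero => cases B <;> simp [orderedSamples]
  | succ k ih =>
    cases B with
    | nil => simp [orderedSamples]
    | cons b L =>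
      simp only [orderedSamples, mem_biUnion, mem_image, List.cons.injEq, ih, mem_erase,
        List.nodup_cons, List.length_cons, List.mem_cons, forall_eq_or_imp]
      grind

lemma sum_orderedSamples_succ (k : ℕ) (D : Finset α) (G : List α → ℝ) :
    ∑ B ∈ orderedSamples (k + 1) D, G B
      = ∑ b ∈ D, ∑ L ∈ orderedSamples k (D.erase b), G (b :: L) := by
  rw [orderedSamples, sum_biUnion]
  · exact sum_congr rfl fun b _ => sum_image fun _ _ _ _ h => (List.cons.inj h).2
  · intro b _ b' _ hne
    simp only [Function.onFun, disjoint_left, mem_image]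
    rintro B ⟨L, _, rfl⟩ ⟨L', _, h⟩
    exact hne (List.cons.inj h).1.symm

lemma sum_powersetCard_sum_permutations (k : ℕ) (D : Finset α) (G : List α → ℝ) :
    ∑ S ∈ D.powersetCard k, (S.toList.permutations.map G).sum
      = ∑ B ∈ orderedSamples k D, G B := by
  have hfiber : ∀ S ∈ D.powersetCard k, (S.toList.permutations.map G).sum
      = ∑ B ∈ orderedSamples k D with B.toFinset = S, G B := by
    intro S hS
    rw [mem_powersetCard] at hS
    rw [← List.sum_toFinset _ (List.nodup_permutations _ S.nodup_toList)]
    refine sum_congr (ext fun B => ?_) fun _ _ => rfl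
    simp only [List.mem_toFinset, List.mem_permutations, mem_filter, mem_orderedSamples]
    constructor
    · intro hB
      refine ⟨⟨hB.nodup_iff.mpr S.nodup_toList, by rw [hB.length_eq, length_toList, hS.2],
        fun x hx => hS.1 (mem_toList.mp (hB.mem_iff.mp hx))⟩, ?_⟩
      rw [List.toFinset_eq_of_perm B S.toList hB, toList_toFinset]
    · rintro ⟨⟨hnd, -, -⟩, rfl⟩
      exact (List.toFinset_toList hnd).symm
  rw [sum_congr rfl hfiber]
  refine sum_fiberwise_of_maps_to (fun B hB => ?_) G
  obtain ⟨hnd, hlen, hmem⟩ := mem_orderedSamples.mp hB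
  exact mem_powersetCard.mpr ⟨fun x hx => hmem x (List.mem_toFinset.mp hx),
    by rw [List.toFinset_card_of_nodup hnd, hlen]⟩

lemma sum_orderedSamples_succ_ordProb_mul (p : α → ℝ) (t : ℝ) (k : ℕ) (D : Finset α)
    (G : List α → ℝ) :
    ∑ B ∈ orderedSamples (k + 1) D, ordProb p t B * G B
      = ∑ b ∈ D, p b / t *
          ∑ L ∈ orderedSamples k (D.erase b), ordProb p (t - p b) L * G (b :: L) := by
  simp only [sum_orderedSamples_succ, ordProb, mul_assoc, mul_sum]

lemma sum_orderedSamples_ordProb {p : α → ℝ} {D : Finset α} {k : ℕ} (hp : ∀ x ∈ D, 0 < p x)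
    (hk : k ≤ D.card) :
    ∑ B ∈ orderedSamples k D, ordProb p (∑ x ∈ D, p x) B = 1 := by
  induction k generalizing D with
  | zero => simp [orderedSamples, ordProb]
  | succ k ih =>
    have hD : 0 < ∑ x ∈ D, p x := sum_pos hp (card_pos.mp (by omega))
    calc ∑ B ∈ orderedSamples (k + 1) D, ordProb p (∑ x ∈ D, p x) B
        = ∑ b ∈ D, p b / (∑ x ∈ D, p x) *
            ∑ L ∈ orderedSamples k (D.erase b), ordProb p (∑ x ∈ D, p x - p b) L := by
          simpa only [mul_one] using
            sum_orderedSamples_succ_ordProb_mul p (∑ x ∈ D, p x) k D fun _ => 1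
      _ = ∑ b ∈ D, p b / (∑ x ∈ D, p x) * 1 := by
          refine sum_congr rfl fun b hb => ?_
          rw [← sum_erase_eq_sub hb, ih (fun x hx => hp x (mem_of_mem_erase hx))
            (by rw [card_erase_of_mem hb]; omega)]
      _ = 1 := by rw [← sum_mul, ← sum_div, div_self hD.ne', one_mul]

lemma sum_orderedSamples_ordProb_mul_sumAndSample [Inhabited α] (f : α → ℝ)
    {p : α → ℝ} {D : Finset α} {k : ℕ} (hp : ∀ x ∈ D, 0 < p x) (hk1 : 1 ≤ k)
    (hk : k ≤ D.card) :
    ∑ B ∈ orderedSamples k D, ordProb p (∑ x ∈ D, p x) B * sumAndSample p f (∑ x ∈ D, p x) B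
      = ∑ x ∈ D, p x * f x := by
  induction k generalizing D with
  | zero => omega
  | succ k ih =>
    have hD : 0 < ∑ x ∈ D, p x := sum_pos hp (card_pos.mp (by omega))
    rw [sum_orderedSamples_succ_ordProb_mul]
    rcases Nat.eq_zero_or_pos k with rfl | hk0
    · simp only [orderedSamples, sum_singleton, ordProb, sumAndSample_singleton, one_mul]
      exact sum_congr rfl fun b _ => by field_simp
    have hfirst : ∀ b ∈ D, ∑ L ∈ orderedSamples k (D.erase b),
        ordProb p (∑ x ∈ D, p x - p b) L * sumAndSample p f (∑ x ∈ D, p x) (b :: L)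
          = ∑ x ∈ D, p x * f x := by
      intro b hb
      have hp' : ∀ x ∈ D.erase b, 0 < p x := fun x hx => hp x (mem_of_mem_erase hx)
      have hk' : k ≤ (D.erase b).card := by rw [card_erase_of_mem hb]; omega
      calc _ = ∑ L ∈ orderedSamples k (D.erase b),
            (ordProb p (∑ x ∈ D.erase b, p x) L * (p b * f b)
              + ordProb p (∑ x ∈ D.erase b, p x) L
                * sumAndSample p f (∑ x ∈ D.erase b, p x) L) := by
            refine sum_congr rfl fun L hL => ?_
            have hL : L ≠ [] := List.ne_nil_of_length_pos <| by
              rw [(mem_orderedSamples.mp hL).2.1]; exact hk0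
            rw [sumAndSample_cons p f _ b hL, sum_erase_eq_sub hb, mul_add]
        _ = p b * f b + ∑ x ∈ D.erase b, p x * f x := by
            rw [sum_add_distrib, ← sum_mul, sum_orderedSamples_ordProb hp' hk', one_mul,
              ih hp' hk0 hk']
        _ = ∑ x ∈ D, p x * f x := add_sum_erase D (fun x => p x * f x) hb
    rw [sum_congr rfl fun b hb => by rw [hfirst b hb], ← sum_mul, ← sum_div, div_self hD.ne',
      one_mul]

end SequentialSampling

theorem stochastic_sum_and_sample_unbiased_general [Inhabited α] (D : Finset α)
    (k : ℕ) (hk1 : 1 ≤ k) (hk : k ≤ D.card) (p f : α → ℝ)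
    (hp : ∀ x ∈ D, 0 < p x) (hsum : ∑ x ∈ D, p x = 1) :
    ∑ S ∈ D.powersetCard k, (S.toList.permutations.map (fun B =>
        ordProb p 1 B * ((B.dropLast.map (fun b => p b * f b)).sum
          + (1 - (B.dropLast.map p).sum) * f B.reverse.headI))).sum
      = ∑ x ∈ D, p x * f x := by
  classical
  rw [sum_powersetCard_sum_permutations]
  simpa only [sumAndSample, hsum] using sum_orderedSamples_ordProb_mul_sumAndSample f hp hk1 hk

theorem stochastic_sum_and_sample_unbiased [DecidableEq α] [Inhabited α] (D : Finset α)
    (k : ℕ) (hk1 : 1 ≤ k) (hk : k ≤ D.card) (p f : α → ℝ)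
    (hp : ∀ x ∈ D, 0 < p x) (hsum : ∑ x ∈ D, p x = 1) :
    ∑ S ∈ D.powersetCard k, (S.toList.permutations.map (fun B =>
        ordProb p 1 B * ((B.dropLast.map (fun b => p b * f b)).sum
          + (1 - (B.dropLast.map p).sum) * f B.reverse.headI))).sum
      = ∑ x ∈ D, p x * f x :=
  stochastic_sum_and_sample_unbiased_general D k hk1 hk p f hp hsum
end

section
/- The conditional probability that s' is the second element sampled given the unordered sample S^k and that the first element is s (with s' ≠ s) equals (p(s')/(1 − p(s))) · R^{D\{s}}(S^k, s'), where R^{D\{s}}(S^k,s') = p^{D\{s,s'}}(S^k\{s,s'}) / p^{D\{s}}(S^k\{s}) is the second-order leave-one-out ratio. -/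
/-!
Every ordering counted in the numerator starts with `s, s'`, and every ordering counted in the
denominator starts with `s`. Peeling off these first draws factors out `p s` (from mass `1`) and
`p s' / (1 - p s)`, leaving exactly the `setProb` of the rest at the reduced mass; `p s > 0`
then cancels.
-/

open Finset MeasureTheory

variable {α : Type*}

lemma sum_map_ordProb_cons {ι : Type*} (p : α → ℝ) (t : ℝ) (b : α) (l : List ι)
    (f : ι → List α) :
    (l.map fun x => ordProb p t (b :: f x)).sum
      = p b / t * (l.map fun x => ordProb p (t - p b) (f x)).sum := by
  simp only [ordProb, List.sum_map_mul_left]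

theorem second_element_conditional_general [DecidableEq α] (D S : Finset α) (hS : S ⊆ D)
    (s s' : α) (hs : s ∈ S)
    (p : α → ℝ) (hp : ∀ x ∈ D, 0 < p x) :
    ((((S.erase s).erase s').toList.permutations.map
        (fun L => ordProb p 1 (s :: s' :: L))).sum)
      / (((S.erase s).toList.permutations.map (fun L => ordProb p 1 (s :: L))).sum)
      = (p s' / (1 - p s)) *
        (setProb p (1 - p s - p s') ((S.erase s).erase s')
          / setProb p (1 - p s) (S.erase s)) := by
  have hps : p s ≠ 0 := (hp s (hS hs)).ne'
  have numerator : (((S.erase s).erase s').toList.permutations.map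
      (fun L => ordProb p 1 (s :: s' :: L))).sum
      = p s * (p s' / (1 - p s) * setProb p (1 - p s - p s') ((S.erase s).erase s')) := by
    rw [sum_map_ordProb_cons p 1 s _ (s' :: ·),
      sum_map_ordProb_cons p (1 - p s) s' _ (fun L => L), div_one]
    rfl
  have denominator : ((S.erase s).toList.permutations.map (fun L => ordProb p 1 (s :: L))).sum
      = p s * setProb p (1 - p s) (S.erase s) := by
    rw [sum_map_ordProb_cons p 1 s _ (fun L => L), div_one]
    rfl
  rw [numerator, denominator, mul_div_mul_left _ _ hps, mul_div_assoc]

theorem second_element_conditional [DecidableEq α] (D S : Finset α) (hS : S ⊆ D)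
    (hcard : 2 ≤ S.card) (s s' : α) (hs : s ∈ S) (hs' : s' ∈ S) (hne : s' ≠ s)
    (p : α → ℝ) (hp : ∀ x ∈ D, 0 < p x) (hsum : ∑ x ∈ D, p x = 1) :
    ((((S.erase s).erase s').toList.permutations.map
        (fun L => ordProb p 1 (s :: s' :: L))).sum)
      / (((S.erase s).toList.permutations.map (fun L => ordProb p 1 (s :: L))).sum)
      = (p s' / (1 - p s)) *
        (setProb p (1 - p s - p s') ((S.erase s).erase s')
          / setProb p (1 - p s) (S.erase s)) :=
  second_element_conditional_general D S hS s s' hs p hp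
end
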